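/- Let 1 ≤ d ≤ n−1 and let g ∈ GL_n(ℝ) be written as g = [B | C], where B is the n×d matrix of its first d columns and C the n×(n−d) matrix of its last n−d columns. Let π : ℝⁿ → (span B)^⊥ be the orthogonal projection onto the orthogonal complement of the column span of B, and let D be the n×(n−d) matrix consisting of the last n−d columns of (gᵀ)⁻¹. Then the columns of π∘C (the projections of the columns of C) are linearly independent and span (span B)^⊥, and the ℤ-span of the columns of D equals the dual lattice of the ℤ-span of the columns of π∘C. -/

import Mathlib

/-!
Put `H = (gᵀ)⁻¹`, so `gᵀ H = 1`: the columns of `D` are orthogonal to those of `B` and dual to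
those of `C`. As `π` moves each column of `C` only by a vector of `span B`, the projected
columns `P` still satisfy `Pᵀ D = 1`, which gives their independence. The columns of `g` span
`ℝⁿ` and `π` kills `span B`, so the projected columns span `π(ℝⁿ) = (span B)^⊥`, which contains
the columns of `D`. Finally `Pᵀ D = 1` identifies the `ℤ`-span of `D` with the dual lattice:
if `y` lies in the span of `P` and pairs integrally, say to `m`, with the columns of `P`, then
`y - D m` lies in that span and is orthogonal to it, hence vanishes.
-/

open Matrix

noncomputable section

/-- The set of all integer linear combinations of the columns of `B`
(the `ℤ`-span of the columns of `B`). -/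
def zspan {n d : ℕ} (B : Matrix (Fin n) (Fin d) ℝ) : Set (Fin n → ℝ) :=
  Set.range fun c : Fin d → ℤ => B.mulVec fun j => (c j : ℝ)

/-- `B` is a `ℤ`-basis matrix for `Λ`: its columns are `ℝ`-linearly independent
and their `ℤ`-span is `Λ`. -/
def IsLatticeBasis {n d : ℕ} (B : Matrix (Fin n) (Fin d) ℝ) (Λ : Set (Fin n → ℝ)) : Prop :=
  LinearIndependent ℝ (fun j : Fin d => fun i : Fin n => B i j) ∧ Λ = zspan B

/-- `Λ` is a `d`-lattice in `ℝⁿ`: it is generated over `ℤ` by `d`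
linearly independent vectors. -/
def IsDLattice {n : ℕ} (d : ℕ) (Λ : Set (Fin n → ℝ)) : Prop :=
  ∃ B : Matrix (Fin n) (Fin d) ℝ, IsLatticeBasis B Λ

/-- `ℤⁿ` viewed as a subset of `ℝⁿ`. -/
def intLattice (n : ℕ) : Set (Fin n → ℝ) :=
  Set.range fun c : Fin n → ℤ => fun i => (c i : ℝ)

/-- `Λ` is primitive inside `Δ` : `Λ = Δ ∩ span_ℝ Λ`. -/
def IsPrimitiveIn {n : ℕ} (Λ Δ : Set (Fin n → ℝ)) : Prop :=
  Λ = Δ ∩ (Submodule.span ℝ Λ : Set (Fin n → ℝ))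

/-- The dual lattice `Λ* = {y ∈ V_Λ : ⟨x,y⟩ ∈ ℤ for all x ∈ Λ}`. -/
def dualLattice {n : ℕ} (Λ : Set (Fin n → ℝ)) : Set (Fin n → ℝ) :=
  {y | y ∈ Submodule.span ℝ Λ ∧ ∀ x ∈ Λ, ∃ m : ℤ, x ⬝ᵥ y = (m : ℝ)}

/-- Orthogonal complement with respect to the standard inner product on `ℝⁿ`. -/
def perp {n : ℕ} (V : Submodule ℝ (Fin n → ℝ)) : Submodule ℝ (Fin n → ℝ) where
  carrier := {y | ∀ x ∈ V, x ⬝ᵥ y = 0}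
  add_mem' := by
    intro a b ha hb x hx
    simp [dotProduct_add, ha x hx, hb x hx]
  zero_mem' := by
    intro x hx
    simp
  smul_mem' := by
    intro c a ha x hx
    simp [dotProduct_smul, ha x hx]

lemma mulVec_mem_span_range_col {m ι : Type*} [Fintype ι] (M : Matrix m ι ℝ) (v : ι → ℝ) :
    M *ᵥ v ∈ Submodule.span ℝ (Set.range M.col) := by
  rw [← Matrix.range_mulVecLin]
  exact ⟨v, rfl⟩

lemma col_mem_zspan {n e : ℕ} (M : Matrix (Fin n) (Fin e) ℝ) (j : Fin e) : M.col j ∈ zspan M := by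
  refine ⟨Pi.single j 1, ?_⟩
  beta_reduce
  rw [← M.mulVec_single_one j]
  congr 1
  funext i
  rw [Pi.single_apply, Pi.single_apply]
  split_ifs <;> simp

lemma span_zspan {n e : ℕ} (M : Matrix (Fin n) (Fin e) ℝ) :
    Submodule.span ℝ (zspan M) = Submodule.span ℝ (Set.range M.col) := by
  apply le_antisymm
  · rw [Submodule.span_le]
    rintro _ ⟨c, rfl⟩
    exact mulVec_mem_span_range_col M _
  · exact Submodule.span_mono (Set.range_subset_iff.mpr (col_mem_zspan M))

theorem zspan_eq_dualLattice_zspan {n e : ℕ} {P D : Matrix (Fin n) (Fin e) ℝ}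
    (hPD : Pᵀ * D = 1) (hD : ∀ k, D.col k ∈ Submodule.span ℝ (Set.range P.col)) :
    zspan D = dualLattice (zspan P) := by
  have hDP : ∀ c, D *ᵥ c ∈ Submodule.span ℝ (Set.range P.col) := fun c =>
    Submodule.span_le.mpr (Set.range_subset_iff.mpr hD) (mulVec_mem_span_range_col D c)
  ext y
  constructor
  · rintro ⟨c, rfl⟩
    refine ⟨by rw [span_zspan]; exact hDP _, ?_⟩
    rintro _ ⟨m, rfl⟩
    refine ⟨∑ j, m j * c j, ?_⟩
    beta_reduce
    rw [dotProduct_mulVec, ← vecMul_transpose, vecMul_vecMul, hPD, vecMul_one]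
    push_cast
    rfl
  · rintro ⟨hy, hint⟩
    choose m hm using fun j => hint (P.col j) (col_mem_zspan P j)
    refine ⟨m, ?_⟩
    set z := y - D *ᵥ fun j => (m j : ℝ)
    have hPz : Pᵀ *ᵥ z = 0 := by
      rw [mulVec_sub, mulVec_mulVec, hPD, one_mulVec, sub_eq_zero]
      funext j
      exact hm j
    rw [span_zspan, ← Matrix.range_mulVecLin] at hy
    obtain ⟨a, ha⟩ : z ∈ LinearMap.range P.mulVecLin := by
      refine sub_mem hy ?_
      rw [Matrix.range_mulVecLin]
      exact hDP _
    have hzz : z ⬝ᵥ z = 0 := calc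
      z ⬝ᵥ z = (P *ᵥ a) ⬝ᵥ z := by rw [← ha]; rfl
      _ = (Pᵀ *ᵥ z) ⬝ᵥ a := by rw [dotProduct_comm, dotProduct_mulVec, mulVec_transpose]
      _ = 0 := by rw [hPz, zero_dotProduct]
    exact (sub_eq_zero.mp (dotProduct_self_eq_zero.mp hzz)).symm

lemma linearIndependent_col_of_mul_eq_one {m ι : Type*} [Fintype m] [Fintype ι] [DecidableEq ι]
    {P : Matrix m ι ℝ} {Q : Matrix ι m ℝ} (h : Q * P = 1) : LinearIndependent ℝ P.col :=
  mulVec_injective_iff.mp fun a b hab => by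
    simpa [mulVec_mulVec, h] using congrArg (Q *ᵥ ·) hab

lemma span_range_col_sup_eq_top {m ι κ : Type*} [Fintype ι] [Fintype κ]
    {B : Matrix m ι ℝ} {C : Matrix m κ ℝ} (h : Function.Surjective (fromCols B C).mulVec) :
    Submodule.span ℝ (Set.range B.col) ⊔ Submodule.span ℝ (Set.range C.col) = ⊤ := by
  refine Submodule.eq_top_iff'.mpr fun y => ?_
  obtain ⟨v, rfl⟩ := h y
  rw [fromCols_mulVec]
  exact Submodule.add_mem_sup (mulVec_mem_span_range_col B _) (mulVec_mem_span_range_col C _)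

lemma fromCols_transpose_mul_fromCols_eq_one {m ι κ : Type*} [Fintype m] [DecidableEq m]
    [Fintype ι] [DecidableEq ι] [Fintype κ] [DecidableEq κ] {g : Matrix m m ℝ} (hg : IsUnit g.det)
    (e : ι ⊕ κ ≃ m) {B B' : Matrix m ι ℝ} {C C' : Matrix m κ ℝ}
    (hBC : g.submatrix id e = fromCols B C) (hBC' : (gᵀ)⁻¹.submatrix id e = fromCols B' C') :
    (fromCols B C)ᵀ * fromCols B' C' = 1 := by
  have hgT : IsUnit gᵀ.det := by rwa [det_transpose]
  rw [← hBC, ← hBC', transpose_submatrix, ← Equiv.coe_refl, submatrix_mul_equiv,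
    mul_nonsing_inv _ hgT, submatrix_one_equiv]

lemma fromCols_mulVec_surjective {m ι κ : Type*} [Fintype m] [DecidableEq m] [Fintype ι]
    [Fintype κ] {g : Matrix m m ℝ} (hg : IsUnit g.det) (e : ι ⊕ κ ≃ m) {B : Matrix m ι ℝ}
    {C : Matrix m κ ℝ} (hBC : g.submatrix id e = fromCols B C) :
    Function.Surjective (fromCols B C).mulVec := by
  rw [← hBC]
  intro y
  obtain ⟨v, rfl⟩ := mulVec_surjective_iff_isUnit.mpr ((isUnit_iff_isUnit_det g).mpr hg) y
  exact ⟨v ∘ e, by rw [submatrix_mulVec_equiv, Function.comp_assoc, e.self_comp_symm]; rfl⟩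

lemma mem_perp_span {n : ℕ} {S : Set (Fin n → ℝ)} {y : Fin n → ℝ}
    (h : ∀ x ∈ S, x ⬝ᵥ y = 0) : y ∈ perp (Submodule.span ℝ S) := by
  intro x hx
  induction hx using Submodule.span_induction with
  | mem x hx => exact h x hx
  | zero => simp
  | add a b _ _ ha hb => simp [add_dotProduct, ha, hb]
  | smul c a _ ha => simp [smul_dotProduct, ha]

lemma eq_zero_of_mem_of_mem_perp {n : ℕ} {V : Submodule ℝ (Fin n → ℝ)} {x : Fin n → ℝ}
    (hx : x ∈ V) (hx' : x ∈ perp V) : x = 0 :=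
  dotProduct_self_eq_zero.mp (hx' x hx)

def IsPerpProjection {n : ℕ} (V : Submodule ℝ (Fin n → ℝ)) (π : (Fin n → ℝ) →ₗ[ℝ] (Fin n → ℝ)) :
    Prop :=
  ∀ x, π x ∈ perp V ∧ x - π x ∈ V

namespace IsPerpProjection

variable {n : ℕ} {V : Submodule ℝ (Fin n → ℝ)} {π : (Fin n → ℝ) →ₗ[ℝ] (Fin n → ℝ)}

lemma apply_eq (hπ : IsPerpProjection V π) {x w : Fin n → ℝ} (hw : w ∈ perp V)
    (hxw : x - w ∈ V) : π x = w := by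
  refine sub_eq_zero.mp (eq_zero_of_mem_of_mem_perp ?_ (sub_mem (hπ x).1 hw))
  simpa using sub_mem hxw (hπ x).2

lemma apply_eq_zero (hπ : IsPerpProjection V π) {x : Fin n → ℝ} (hx : x ∈ V) : π x = 0 :=
  hπ.apply_eq (zero_mem _) (by simpa using hx)

lemma apply_eq_self (hπ : IsPerpProjection V π) {y : Fin n → ℝ} (hy : y ∈ perp V) : π y = y :=
  hπ.apply_eq hy (by simp)

lemma range_eq (hπ : IsPerpProjection V π) : LinearMap.range π = perp V :=
  le_antisymm (by rintro _ ⟨x, rfl⟩; exact (hπ x).1)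
    fun y hy => ⟨y, hπ.apply_eq_self hy⟩

lemma map_eq_perp_of_sup_eq_top (hπ : IsPerpProjection V π) {S : Submodule ℝ (Fin n → ℝ)}
    (hS : V ⊔ S = ⊤) : S.map π = perp V := by
  have hV : V.map π = ⊥ := LinearMap.le_ker_iff_map.mp fun x hx => hπ.apply_eq_zero hx
  rw [← hπ.range_eq, LinearMap.range_eq_map, ← hS, Submodule.map_sup, hV, bot_sup_eq]

lemma apply_dotProduct (hπ : IsPerpProjection V π) (x : Fin n → ℝ) {y : Fin n → ℝ}
    (hy : y ∈ perp V) : π x ⬝ᵥ y = x ⬝ᵥ y := by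
  have := hy _ (hπ x).2
  rw [sub_dotProduct, sub_eq_zero] at this
  exact this.symm

end IsPerpProjection

/-- for `g = [B | C] ∈ GL_n(ℝ)`, the orthogonal projections of the
columns of `C` to `(span B)^⊥` are independent and span `(span B)^⊥`, and the
last `n-d` columns of `(gᵀ)⁻¹` span (over `ℤ`) the dual lattice of the `ℤ`-span
of these projections. -/
theorem stmt6 (n d : ℕ) (hdn : d ≤ n - 1)
    (g : Matrix (Fin n) (Fin n) ℝ) (hg : IsUnit g.det)
    (B : Matrix (Fin n) (Fin d) ℝ)
    (hB : ∀ (i : Fin n) (j : Fin d), B i j = g i (Fin.castLE (by omega) j))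
    (C : Matrix (Fin n) (Fin (n - d)) ℝ)
    (hC : ∀ (i : Fin n) (j : Fin (n - d)),
      C i j = g i ⟨d + (j : ℕ), by have := j.isLt; omega⟩)
    (D : Matrix (Fin n) (Fin (n - d)) ℝ)
    (hD : ∀ (i : Fin n) (j : Fin (n - d)),
      D i j = (gᵀ)⁻¹ i ⟨d + (j : ℕ), by have := j.isLt; omega⟩)
    (π : (Fin n → ℝ) →ₗ[ℝ] (Fin n → ℝ))
    (hπ : ∀ x : Fin n → ℝ,
      π x ∈ perp (Submodule.span ℝ (Set.range fun j : Fin d => fun i : Fin n => B i j)) ∧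
      x - π x ∈ Submodule.span ℝ (Set.range fun j : Fin d => fun i : Fin n => B i j)) :
    LinearIndependent ℝ (fun j : Fin (n - d) => π (fun i : Fin n => C i j)) ∧
    Submodule.span ℝ (Set.range fun j : Fin (n - d) => π (fun i : Fin n => C i j)) =
      perp (Submodule.span ℝ (Set.range fun j : Fin d => fun i : Fin n => B i j)) ∧
    zspan D = dualLattice (zspan (Matrix.of fun i (j : Fin (n - d)) =>
      π (fun k : Fin n => C k j) i)) := by
  set V := Submodule.span ℝ (Set.range fun j : Fin d => fun i : Fin n => B i j)
  set P := Matrix.of fun i (j : Fin (n - d)) => π (fun k : Fin n => C k j) i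
  let e : Fin d ⊕ Fin (n - d) ≃ Fin n := finSumFinEquiv.trans (finCongr (by omega))
  have hgBC : g.submatrix id e = fromCols B C := by
    ext i (j | j)
    exacts [(hB i j).symm, (hC i j).symm]
  have hgD : (gᵀ)⁻¹.submatrix id e = fromCols ((gᵀ)⁻¹.submatrix id (e ∘ Sum.inl)) D := by
    ext i (j | j)
    exacts [rfl, (hD i j).symm]
  obtain ⟨-, hBD, -, hCD⟩ : _ ∧ Bᵀ * D = 0 ∧ _ ∧ Cᵀ * D = 1 := by
    have h := fromCols_transpose_mul_fromCols_eq_one hg e hgBC hgD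
    rwa [transpose_fromCols, fromRows_mul_fromCols, ← fromBlocks_one, fromBlocks_inj] at h
  have hDperp : ∀ k, D.col k ∈ perp V := fun k =>
    mem_perp_span <| Set.forall_mem_range.mpr fun j => congrFun (congrFun hBD j) k
  have hspanP : Submodule.span ℝ (Set.range P.col) = perp V := by
    have hsup : V ⊔ Submodule.span ℝ (Set.range C.col) = ⊤ :=
      span_range_col_sup_eq_top (fromCols_mulVec_surjective hg e hgBC)
    rw [← IsPerpProjection.map_eq_perp_of_sup_eq_top hπ hsup,
      Submodule.map_span, ← Set.range_comp]
    rfl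
  have hPD : Pᵀ * D = 1 := by
    ext j k
    rw [← hCD]
    exact IsPerpProjection.apply_dotProduct hπ (C.col j) (hDperp k)
  have hDP : Dᵀ * P = 1 := by rw [← transpose_transpose P, ← transpose_mul, hPD, transpose_one]
  exact ⟨linearIndependent_col_of_mul_eq_one hDP, hspanP,
    zspan_eq_dualLattice_zspan hPD fun k => hspanP ▸ hDperp k⟩
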